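/- Let J > J_c where J_c = Σ_{y₁>0, y₂∈ℤ} y₁/(y₁²+y₂²)^{p/2} with p > 4. Then for the Hamiltonian H(σ) = -J Σ_{⟨x,y⟩}(σₓσ_y - 1) + Σ_{{x,y}} (σₓσ_y - 1)/|x-y|^p on ℤ², the constant configurations σ ≡ +1 and σ ≡ -1 are infinite volume ground states: for any finite X ⊂ ℤ² and any σ_X ∈ {±1}^X, H_X(σ_X | σ⁺) ≥ H_X(σ⁺_X | σ⁺) = 0. -/

import Mathlib

/-- Euclidean norm of a point of `ℤ²`. -/
noncomputable def zNorm (x : ℤ × ℤ) : ℝ := Real.sqrt ((x.1 : ℝ) ^ 2 + (x.2 : ℝ) ^ 2)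

/-- `J_c = Σ_{y₁ > 0, y₂ ∈ ℤ} y₁/(y₁² + y₂²)^{p/2}`. -/
noncomputable def Jcrit (p : ℝ) : ℝ :=
  ∑' y : ℤ × ℤ, if 0 < y.1 then (y.1 : ℝ) / ((y.1 : ℝ) ^ 2 + (y.2 : ℝ) ^ 2) ^ (p / 2) else 0

/-- `H_X(σ_X | s)`: relative energy of the configuration equal to `σ` on the finite set
`X` and to the boundary condition `s` outside `X`, for the Hamiltonian
`H(σ) = -J Σ_{⟨x,y⟩}(σₓσ_y - 1) + Σ_{{x,y}} (σₓσ_y - 1)/|x-y|^p`. -/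
noncomputable def energyBC (p J : ℝ) (X : Finset (ℤ × ℤ)) (σ s : ℤ × ℤ → ℤ) : ℝ :=
  -J * ((1 / 2) * ∑ x ∈ X, ∑ y ∈ X,
      (if zNorm (x - y) = 1 then ((σ x * σ y : ℤ) : ℝ) - 1 else 0))
  + (1 / 2) * ∑ x ∈ X, ∑ y ∈ X,
      (if x = y then 0 else (((σ x * σ y : ℤ) : ℝ) - 1) / zNorm (x - y) ^ p)
  - J * ∑ x ∈ X, ∑' y : {y : ℤ × ℤ // y ∉ X},
      (if zNorm (x - (y : ℤ × ℤ)) = 1 then ((σ x * s (y : ℤ × ℤ) : ℤ) : ℝ) - 1 else 0)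
  + ∑ x ∈ X, ∑' y : {y : ℤ × ℤ // y ∉ X},
      (((σ x * s (y : ℤ × ℤ) : ℤ) : ℝ) - 1) / zNorm (x - (y : ℤ × ℤ)) ^ p

/-!
Extend `σ` by `+1` outside `X` to a configuration `τ` with finitely many minus spins. Summing
over ordered pairs,
`2 H_X(σ_X | σ⁺) = J Σ_{|x-y|=1} (1 - τ_x τ_y) - Σ_{x ≠ y} (1 - τ_x τ_y) / |x-y|^p`.
For signs, `1 - ac ≤ (1 - ab) + (1 - bc)`, so the bond energy `D(v) = Σ_x (1 - τ_x τ_{x+v})`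
is subadditive in `v`, whence `D(v) ≤ |v₁| D(e₁) + |v₂| D(e₂)`. Since
`Σ_v |vᵢ| |v|^{-p} = 2 J_c`, the long-range part is at most `2 J_c (D(e₁) + D(e₂))`, while the
nearest-neighbour part equals `2 J (D(e₁) + D(e₂))`. The case of `σ⁻` follows by flipping all
spins.
-/

open Finset

lemma one_sub_mul_nonneg_of_sign {a b : ℝ} (ha : a = 1 ∨ a = -1) (hb : b = 1 ∨ b = -1) :
    0 ≤ 1 - a * b := by
  rcases ha with rfl | rfl <;> rcases hb with rfl | rfl <;> norm_num

lemma one_sub_mul_le_add_of_sign {a b c : ℝ} (ha : a = 1 ∨ a = -1) (hb : b = 1 ∨ b = -1)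
    (hc : c = 1 ∨ c = -1) : 1 - a * c ≤ (1 - a * b) + (1 - b * c) := by
  rcases ha with rfl | rfl <;> rcases hb with rfl | rfl <;> rcases hc with rfl | rfl <;> norm_num

section BondEnergy

variable {G : Type*} [AddCommGroup G] {s : G → ℝ}

noncomputable def bondEnergy (s : G → ℝ) (v : G) : ℝ := ∑' x, (1 - s x * s (x + v))

lemma summable_one_sub_mul_add (hfin : {x | s x ≠ 1}.Finite) (v : G) :
    Summable fun x => 1 - s x * s (x + v) := by
  apply summable_of_hasFiniteSupport
  refine (hfin.union (hfin.preimage (add_left_injective v).injOn)).subset fun x hx => ?_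
  by_contra h
  simp only [Set.mem_union, Set.mem_ofPred_eq, Set.mem_preimage, not_or, not_not] at h
  simp [h.1, h.2] at hx

lemma bondEnergy_nonneg (hs : ∀ x, s x = 1 ∨ s x = -1) (v : G) : 0 ≤ bondEnergy s v :=
  tsum_nonneg fun x => one_sub_mul_nonneg_of_sign (hs x) (hs (x + v))

lemma bondEnergy_zero (hs : ∀ x, s x = 1 ∨ s x = -1) : bondEnergy s 0 = 0 := by
  simp only [bondEnergy, add_zero]
  convert tsum_zero with x
  rcases hs x with h | h <;> rw [h] <;> norm_num

lemma bondEnergy_neg (s : G → ℝ) (v : G) : bondEnergy s (-v) = bondEnergy s v := by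
  rw [bondEnergy, ← (Equiv.addRight v).tsum_eq]
  simp [bondEnergy, mul_comm]

lemma bondEnergy_add_le (hs : ∀ x, s x = 1 ∨ s x = -1) (hfin : {x | s x ≠ 1}.Finite)
    (v w : G) :
    bondEnergy s (v + w) ≤ bondEnergy s v + bondEnergy s w := by
  have hw : bondEnergy s w = ∑' x, (1 - s (x + v) * s (x + (v + w))) := by
    rw [bondEnergy, ← (Equiv.addRight v).tsum_eq]
    simp [add_assoc]
  have hsv := summable_one_sub_mul_add hfin v
  have hsw : Summable fun x => 1 - s (x + v) * s (x + (v + w)) := by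
    simpa [Function.comp_def, add_assoc] using
      (summable_one_sub_mul_add hfin w).comp_injective (add_left_injective v)
  calc bondEnergy s (v + w)
      ≤ ∑' x, ((1 - s x * s (x + v)) + (1 - s (x + v) * s (x + (v + w)))) :=
        (summable_one_sub_mul_add hfin (v + w)).tsum_le_tsum
          (fun x => one_sub_mul_le_add_of_sign (hs _) (hs _) (hs _)) (hsv.add hsw)
    _ = bondEnergy s v + bondEnergy s w := by rw [hsv.tsum_add hsw, hw, bondEnergy]

lemma bondEnergy_zsmul_le (hs : ∀ x, s x = 1 ∨ s x = -1) (hfin : {x | s x ≠ 1}.Finite)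
    (n : ℤ) (v : G) : bondEnergy s (n • v) ≤ |(n : ℝ)| * bondEnergy s v := by
  have hnat : ∀ m : ℕ, bondEnergy s (m • v) ≤ m * bondEnergy s v := by
    intro m
    induction m with
    | zero => simp [bondEnergy_zero hs]
    | succ m ih =>
      rw [succ_nsmul, Nat.cast_succ, add_one_mul]
      exact (bondEnergy_add_le hs hfin _ _).trans (by linarith)
  obtain ⟨m, rfl | rfl⟩ := Int.eq_nat_or_neg n
  · simpa using hnat m
  · simpa [bondEnergy_neg] using hnat m

end BondEnergy

section PairSums

variable {G : Type*} [AddCommGroup G] {s : G → ℝ}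

def diffEquiv : G × G ≃ G × G where
  toFun p := (p.2 + p.1, p.2)
  invFun z := (z.1 - z.2, z.2)
  left_inv p := by simp
  right_inv z := by simp

lemma hasSum_weight_mul_one_sub_mul (hs : ∀ x, s x = 1 ∨ s x = -1)
    (hfin : {x | s x ≠ 1}.Finite) {w : G → ℝ} (hw : 0 ≤ w)
    (hwD : Summable fun v => w v * bondEnergy s v) :
    HasSum (fun z : G × G => w (z.1 - z.2) * (1 - s z.1 * s z.2))
      (∑' v, w v * bondEnergy s v) := by
  set g : G × G → ℝ := fun p => w p.1 * (1 - s p.2 * s (p.2 + p.1))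
  have hfiber : ∀ v, ∑' x, g (v, x) = w v * bondEnergy s v := fun v => by
    rw [bondEnergy, ← tsum_mul_left]
  have hg : Summable g := by
    refine (summable_prod_of_nonneg fun p => mul_nonneg (hw _)
      (one_sub_mul_nonneg_of_sign (hs _) (hs _))).mpr ⟨fun v => ?_, ?_⟩
    · exact (summable_one_sub_mul_add hfin v).mul_left (w v)
    · exact hwD.congr fun v => (hfiber v).symm
  rw [← (diffEquiv (G := G)).hasSum_iff]
  convert hg.hasSum using 1
  · ext p
    simp [diffEquiv, g, mul_comm (s p.2)]
  · rw [hg.tsum_prod]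
    exact tsum_congr fun v => (hfiber v).symm

lemma tsum_eq_sum_add_two_mul_tsum_compl {α : Type*} (X : Finset α) {F : α × α → ℝ}
    (hF : Summable F) (hsymm : ∀ x y, F (x, y) = F (y, x))
    (hzero : ∀ x ∉ X, ∀ y ∉ X, F (x, y) = 0) :
    ∑' z, F z
      = ∑ x ∈ X, ∑ y ∈ X, F (x, y) + 2 * ∑ x ∈ X, ∑' y : {y // y ∉ X}, F (x, y) := by
  have hrow : ∀ x, ∑' y, F (x, y) = ∑ y ∈ X, F (x, y) + ∑' y : {y // y ∉ X}, F (x, y) :=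
    fun x => ((hF.prod_factor x).sum_add_tsum_compl (s := X)).symm
  have hcol : ∀ x : ((X : Set α)ᶜ : Set α), ∑' y, F (x, y) = ∑ y ∈ X, F (y, x) := by
    intro x
    rw [hrow, tsum_congr fun y : {y // y ∉ X} => hzero x x.2 y y.2, tsum_zero, add_zero]
    exact sum_congr rfl fun y _ => hsymm _ _
  rw [hF.tsum_prod, ← hF.prod.sum_add_tsum_compl (s := X), tsum_congr hcol,
    Summable.tsum_finsetSum (f := fun y (x : ((X : Set α)ᶜ : Set α)) => F (y, x))
      fun y _ => (hF.prod_factor y).subtype _,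
    sum_congr rfl fun x _ => hrow x, sum_add_distrib, add_assoc, two_mul]
  rfl

end PairSums

section LatticeKernel

lemma zNorm_rpow (p : ℝ) (v : ℤ × ℤ) :
    zNorm v ^ p = ((v.1 : ℝ) ^ 2 + (v.2 : ℝ) ^ 2) ^ (p / 2) := by
  rw [zNorm, Real.sqrt_eq_rpow, ← Real.rpow_mul (by positivity)]
  ring_nf

lemma zNorm_neg (v : ℤ × ℤ) : zNorm (-v) = zNorm v := by
  simp [zNorm]

lemma zNorm_swap (v : ℤ × ℤ) : zNorm v.swap = zNorm v := by
  simp [zNorm, add_comm]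

lemma abs_fst_le_zNorm (v : ℤ × ℤ) : |(v.1 : ℝ)| ≤ zNorm v :=
  Real.abs_le_sqrt (le_add_of_nonneg_right (sq_nonneg _))

lemma abs_snd_le_zNorm (v : ℤ × ℤ) : |(v.2 : ℝ)| ≤ zNorm v :=
  Real.abs_le_sqrt (le_add_of_nonneg_left (sq_nonneg _))

lemma zNorm_eq_one_iff (v : ℤ × ℤ) :
    zNorm v = 1 ↔ v = (1, 0) ∨ v = (-1, 0) ∨ v = (0, 1) ∨ v = (0, -1) := by
  obtain ⟨a, b⟩ := v
  have hsq : zNorm (a, b) = 1 ↔ a ^ 2 + b ^ 2 = 1 := by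
    rw [zNorm, Real.sqrt_eq_one]
    exact_mod_cast Iff.rfl
  rw [hsq]
  constructor
  · intro h
    have ha : -1 ≤ a ∧ a ≤ 1 := ⟨by nlinarith [sq_nonneg b], by nlinarith [sq_nonneg b]⟩
    have hb : -1 ≤ b ∧ b ≤ 1 := ⟨by nlinarith [sq_nonneg a], by nlinarith [sq_nonneg a]⟩
    obtain ⟨ha1, ha2⟩ := ha
    obtain ⟨hb1, hb2⟩ := hb
    interval_cases a <;> interval_cases b <;> simp_all
  · rintro (h | h | h | h) <;> simp_all

lemma summable_zNorm_rpow_neg {q : ℝ} (hq : 2 < q) :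
    Summable fun v : ℤ × ℤ => zNorm v ^ (-q) := by
  have hbox := (EisensteinSeries.summable_one_div_norm_rpow hq).comp_injective
    (finTwoArrowEquiv ℤ).symm.injective
  refine hbox.of_nonneg_of_le (fun v => Real.rpow_nonneg (Real.sqrt_nonneg _) _) fun v => ?_
  rcases eq_or_ne v 0 with rfl | hv
  · rw [show zNorm 0 = 0 by simp [zNorm], Real.zero_rpow (by linarith)]
    exact Real.rpow_nonneg (norm_nonneg _) _
  · refine Real.rpow_le_rpow_of_nonpos (norm_pos_iff.mpr ?_) ?_ (by linarith)
    · simpa [Prod.ext_iff, funext_iff, Fin.forall_fin_two] using hv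
    · refine (pi_norm_le_iff_of_nonneg (Real.sqrt_nonneg _)).mpr (Fin.forall_fin_two.mpr ?_)
      simpa using ⟨abs_fst_le_zNorm v, abs_snd_le_zNorm v⟩

lemma zNorm_pos {v : ℤ × ℤ} (hv : v ≠ 0) : 0 < zNorm v := by
  obtain ⟨a, b⟩ := v
  rw [zNorm, Real.sqrt_pos]
  have hab : a ≠ 0 ∨ b ≠ 0 := by
    contrapose! hv
    rw [hv.1, hv.2, Prod.mk_zero_zero]
  rcases hab with h | h <;> positivity

lemma summable_abs_fst_mul_inv_zNorm_rpow {p : ℝ} (hp : 3 < p) :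
    Summable fun v : ℤ × ℤ => |(v.1 : ℝ)| * (zNorm v ^ p)⁻¹ := by
  refine (summable_zNorm_rpow_neg (by linarith : 2 < p - 1)).of_nonneg_of_le
    (fun v => by unfold zNorm; positivity) fun v => ?_
  rcases eq_or_ne v 0 with rfl | hv
  · rw [Prod.fst_zero, Int.cast_zero, abs_zero, zero_mul]
    exact Real.rpow_nonneg (Real.sqrt_nonneg _) _
  · have h0 := zNorm_pos hv
    calc |(v.1 : ℝ)| * (zNorm v ^ p)⁻¹ ≤ zNorm v * (zNorm v ^ p)⁻¹ := by
          gcongr; exact abs_fst_le_zNorm v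
      _ = zNorm v ^ (-(p - 1)) := by
          rw [show -(p - 1) = 1 - p by ring, Real.rpow_sub h0, Real.rpow_one, div_eq_mul_inv]

lemma summable_abs_snd_mul_inv_zNorm_rpow {p : ℝ} (hp : 3 < p) :
    Summable fun v : ℤ × ℤ => |(v.2 : ℝ)| * (zNorm v ^ p)⁻¹ := by
  rw [← (Equiv.prodComm ℤ ℤ).summable_iff]
  simpa [Function.comp_def, zNorm_swap] using summable_abs_fst_mul_inv_zNorm_rpow hp

lemma tsum_abs_fst_mul_inv_zNorm_rpow {p : ℝ} (hp : 3 < p) :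
    ∑' v : ℤ × ℤ, |(v.1 : ℝ)| * (zNorm v ^ p)⁻¹ = 2 * Jcrit p := by
  set f : ℤ × ℤ → ℝ := fun v => if 0 < v.1 then (v.1 : ℝ) * (zNorm v ^ p)⁻¹ else 0
  have hJ : Jcrit p = ∑' v, f v :=
    tsum_congr fun v => by simp only [f, zNorm_rpow, div_eq_mul_inv]
  have hsplit : ∀ v : ℤ × ℤ, |(v.1 : ℝ)| * (zNorm v ^ p)⁻¹ = f v + f (-v) := by
    intro v
    rcases lt_trichotomy v.1 0 with h | h | h
    · have h' : (v.1 : ℝ) < 0 := by exact_mod_cast h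
      simp [f, h.not_gt, h, zNorm_neg, abs_of_neg h']
    · simp [f, h]
    · have h' : (0 : ℝ) < v.1 := by exact_mod_cast h
      simp [f, h, h.le, zNorm_neg, abs_of_pos h']
  have hf0 : ∀ v, 0 ≤ f v := by
    intro v
    simp only [f]
    split_ifs with h
    · have : (0 : ℝ) < v.1 := by exact_mod_cast h
      unfold zNorm; positivity
    · exact le_rfl
  have hf : Summable f := (summable_abs_fst_mul_inv_zNorm_rpow hp).of_nonneg_of_le hf0
    fun v => by rw [hsplit]; exact le_add_of_nonneg_right (hf0 _)
  have hneg : ∑' v, f (-v) = ∑' v, f v := (Equiv.neg (ℤ × ℤ)).tsum_eq f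
  rw [tsum_congr hsplit, hf.tsum_add (g := fun v => f (-v)) (hf.comp_injective neg_injective),
    hneg, hJ]
  ring

lemma tsum_abs_snd_mul_inv_zNorm_rpow {p : ℝ} (hp : 3 < p) :
    ∑' v : ℤ × ℤ, |(v.2 : ℝ)| * (zNorm v ^ p)⁻¹ = 2 * Jcrit p := by
  rw [← tsum_abs_fst_mul_inv_zNorm_rpow hp, ← (Equiv.prodComm ℤ ℤ).tsum_eq]
  simp [zNorm_swap]

end LatticeKernel

section LatticeBonds

variable {s : ℤ × ℤ → ℝ}

lemma bondEnergy_le_abs_mul_add (hs : ∀ x, s x = 1 ∨ s x = -1) (hfin : {x | s x ≠ 1}.Finite)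
    (v : ℤ × ℤ) :
    bondEnergy s v ≤ |(v.1 : ℝ)| * bondEnergy s (1, 0) + |(v.2 : ℝ)| * bondEnergy s (0, 1) :=
  calc bondEnergy s v = bondEnergy s (v.1 • (1, 0) + v.2 • (0, 1)) := by
        congr 1; ext <;> simp
    _ ≤ _ := (bondEnergy_add_le hs hfin _ _).trans
        (add_le_add (bondEnergy_zsmul_le hs hfin _ _) (bondEnergy_zsmul_le hs hfin _ _))

noncomputable def nnWeight (v : ℤ × ℤ) : ℝ := if zNorm v = 1 then 1 else 0

noncomputable def lrWeight (p : ℝ) (v : ℤ × ℤ) : ℝ := (zNorm v ^ p)⁻¹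

lemma hasSum_nnWeight_mul (hs : ∀ x, s x = 1 ∨ s x = -1) (hfin : {x | s x ≠ 1}.Finite) :
    HasSum (fun z : (ℤ × ℤ) × (ℤ × ℤ) => nnWeight (z.1 - z.2) * (1 - s z.1 * s z.2))
      (2 * (bondEnergy s (1, 0) + bondEnergy s (0, 1))) := by
  set U : Finset (ℤ × ℤ) := {(1, 0), (-1, 0), (0, 1), (0, -1)}
  have hU : ∀ v ∉ U, nnWeight v * bondEnergy s v = 0 := by
    intro v hv
    rw [nnWeight, if_neg (fun h => hv (by simpa [U] using (zNorm_eq_one_iff v).mp h)), zero_mul]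
  have hsum := hasSum_weight_mul_one_sub_mul hs hfin
    (fun v => by unfold nnWeight; split_ifs <;> norm_num) (summable_of_ne_finset_zero hU)
  convert hsum using 1
  have hU_sum : ∑ v ∈ U, nnWeight v * bondEnergy s v = bondEnergy s (1, 0)
      + (bondEnergy s (-1, 0) + (bondEnergy s (0, 1) + bondEnergy s (0, -1))) := by
    simp [U, nnWeight, zNorm_eq_one_iff]
  have h₁ : bondEnergy s (-1, 0) = bondEnergy s (1, 0) := bondEnergy_neg s (1, 0)
  have h₂ : bondEnergy s (0, -1) = bondEnergy s (0, 1) := bondEnergy_neg s (0, 1)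
  rw [tsum_eq_sum hU, hU_sum, h₁, h₂]
  ring

lemma lrWeight_nonneg (p : ℝ) (v : ℤ × ℤ) : 0 ≤ lrWeight p v := by
  unfold lrWeight zNorm; positivity

lemma lrWeight_mul_bondEnergy_le (hs : ∀ x, s x = 1 ∨ s x = -1) (hfin : {x | s x ≠ 1}.Finite)
    (p : ℝ) (v : ℤ × ℤ) :
    lrWeight p v * bondEnergy s v ≤ |(v.1 : ℝ)| * lrWeight p v * bondEnergy s (1, 0)
      + |(v.2 : ℝ)| * lrWeight p v * bondEnergy s (0, 1) := by
  have := mul_le_mul_of_nonneg_left (bondEnergy_le_abs_mul_add hs hfin v) (lrWeight_nonneg p v)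
  linarith

lemma hasSum_abs_mul_lrWeight_mul_add {p : ℝ} (hp : 3 < p) (a b : ℝ) :
    HasSum
      (fun v : ℤ × ℤ => |(v.1 : ℝ)| * lrWeight p v * a + |(v.2 : ℝ)| * lrWeight p v * b)
      (2 * Jcrit p * (a + b)) := by
  have h₁ := (summable_abs_fst_mul_inv_zNorm_rpow hp).hasSum
  have h₂ := (summable_abs_snd_mul_inv_zNorm_rpow hp).hasSum
  rw [tsum_abs_fst_mul_inv_zNorm_rpow hp] at h₁
  rw [tsum_abs_snd_mul_inv_zNorm_rpow hp] at h₂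
  rw [mul_add]
  exact (h₁.mul_right a).add (h₂.mul_right b)

lemma summable_lrWeight_mul_bondEnergy (hs : ∀ x, s x = 1 ∨ s x = -1)
    (hfin : {x | s x ≠ 1}.Finite) {p : ℝ} (hp : 3 < p) :
    Summable fun v => lrWeight p v * bondEnergy s v :=
  (hasSum_abs_mul_lrWeight_mul_add hp _ _).summable.of_nonneg_of_le
    (fun v => mul_nonneg (lrWeight_nonneg p v) (bondEnergy_nonneg hs v))
    (lrWeight_mul_bondEnergy_le hs hfin p)

lemma tsum_lrWeight_mul_bondEnergy_le (hs : ∀ x, s x = 1 ∨ s x = -1)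
    (hfin : {x | s x ≠ 1}.Finite) {p : ℝ} (hp : 3 < p) :
    ∑' v, lrWeight p v * bondEnergy s v
      ≤ 2 * Jcrit p * (bondEnergy s (1, 0) + bondEnergy s (0, 1)) :=
  hasSum_le (lrWeight_mul_bondEnergy_le hs hfin p)
    (summable_lrWeight_mul_bondEnergy hs hfin hp).hasSum (hasSum_abs_mul_lrWeight_mul_add hp _ _)

end LatticeBonds

section Energy

variable (X : Finset (ℤ × ℤ)) (σ : ℤ × ℤ → ℤ)

noncomputable def plusExtension (x : ℤ × ℤ) : ℝ := if x ∈ X then (σ x : ℝ) else 1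

lemma plusExtension_eq_one_or_neg_one (hσ : ∀ x, σ x = 1 ∨ σ x = -1) (x : ℤ × ℤ) :
    plusExtension X σ x = 1 ∨ plusExtension X σ x = -1 := by
  unfold plusExtension
  split_ifs
  · rcases hσ x with h | h <;> simp [h]
  · exact Or.inl rfl

lemma finite_plusExtension_ne_one : {x | plusExtension X σ x ≠ 1}.Finite :=
  X.finite_toSet.subset fun x hx => by
    by_contra h
    exact hx (if_neg h)

lemma tsum_weight_mul_plusExtension_eq {w : ℤ × ℤ → ℝ} (hw : ∀ v, w (-v) = w v)
    (hF : Summable fun z : (ℤ × ℤ) × (ℤ × ℤ) =>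
      w (z.1 - z.2) * (1 - plusExtension X σ z.1 * plusExtension X σ z.2)) :
    ∑' z : (ℤ × ℤ) × (ℤ × ℤ),
        w (z.1 - z.2) * (1 - plusExtension X σ z.1 * plusExtension X σ z.2)
      = ∑ x ∈ X, ∑ y ∈ X, w (x - y) * (1 - σ x * σ y)
        + 2 * ∑ x ∈ X, ∑' y : {y // y ∉ X}, w (x - y) * (1 - σ x) := by
  rw [tsum_eq_sum_add_two_mul_tsum_compl X hF]
  · refine congrArg₂ (· + 2 * ·) ?_ ?_
    · exact sum_congr rfl fun x hx => sum_congr rfl fun y hy => by simp [plusExtension, hx, hy]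
    · exact sum_congr rfl fun x hx => tsum_congr fun y => by simp [plusExtension, hx, y.2]
  · intro x y
    rw [← neg_sub, hw, mul_comm (plusExtension X σ x)]
  · intro x hx y hy
    simp [plusExtension, hx, hy]

lemma energyBC_one_eq {p : ℝ} (hp : p ≠ 0) (J : ℝ) {N L : ℝ}
    (hN : HasSum (fun z : (ℤ × ℤ) × (ℤ × ℤ) =>
      nnWeight (z.1 - z.2) * (1 - plusExtension X σ z.1 * plusExtension X σ z.2)) N)
    (hL : HasSum (fun z : (ℤ × ℤ) × (ℤ × ℤ) =>
      lrWeight p (z.1 - z.2) * (1 - plusExtension X σ z.1 * plusExtension X σ z.2)) L) :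
    energyBC p J X σ (fun _ => 1) = (J * N - L) / 2 := by
  rw [← hN.tsum_eq, ← hL.tsum_eq,
    tsum_weight_mul_plusExtension_eq X σ (fun v => by simp [nnWeight, zNorm_neg]) hN.summable,
    tsum_weight_mul_plusExtension_eq X σ (fun v => by simp [lrWeight, zNorm_neg]) hL.summable]
  -- `zNorm 0 ^ p = 0` and `0⁻¹ = 0`, so the diagonal terms vanish either way
  have hdiag : ∀ x y : ℤ × ℤ, ∀ c : ℝ,
      (if x = y then 0 else c * (zNorm (x - y) ^ p)⁻¹) = c * (zNorm (x - y) ^ p)⁻¹ := by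
    intro x y c
    split_ifs with h
    · simp [h, zNorm, Real.zero_rpow hp]
    · rfl
  have hnn : ∀ (P : Prop) [Decidable P] (a : ℝ),
      (if P then a - 1 else 0) = -(if P then 1 - a else 0) := by
    intro P _ a
    split_ifs <;> ring
  have hlr : ∀ a k : ℝ, (a - 1) * k = -(k * (1 - a)) := fun a k => by ring
  unfold energyBC nnWeight lrWeight
  simp only [div_eq_mul_inv, hdiag, ite_mul, one_mul, zero_mul, mul_one]
  push_cast
  simp only [hnn, hlr, sum_neg_distrib, tsum_neg]
  ring

end Energy

lemma energyBC_one_nonneg {p J : ℝ} (hp : 3 < p) (hJ : Jcrit p ≤ J) (X : Finset (ℤ × ℤ))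
    {σ : ℤ × ℤ → ℤ} (hσ : ∀ x, σ x = 1 ∨ σ x = -1) :
    0 ≤ energyBC p J X σ (fun _ => 1) := by
  have hs := plusExtension_eq_one_or_neg_one X σ hσ
  have hfin := finite_plusExtension_ne_one X σ
  have hL := hasSum_weight_mul_one_sub_mul hs hfin (lrWeight_nonneg p)
    (summable_lrWeight_mul_bondEnergy hs hfin hp)
  rw [energyBC_one_eq X σ (by linarith) J (hasSum_nnWeight_mul hs hfin) hL]
  have hbound := tsum_lrWeight_mul_bondEnergy_le hs hfin hp
  have hS := add_nonneg (bondEnergy_nonneg hs (1, 0)) (bondEnergy_nonneg hs (0, 1))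
  nlinarith [mul_nonneg (sub_nonneg.mpr hJ) hS]

lemma energyBC_const {c : ℤ} (hc : c * c = 1) (p J : ℝ) (X : Finset (ℤ × ℤ)) :
    energyBC p J X (fun _ => c) (fun _ => c) = 0 := by
  simp [energyBC, hc]

lemma energyBC_neg_one (p J : ℝ) (X : Finset (ℤ × ℤ)) (σ : ℤ × ℤ → ℤ) :
    energyBC p J X σ (fun _ => -1) = energyBC p J X (fun x => -σ x) (fun _ => 1) := by
  simp only [energyBC, mul_neg_one, mul_one, neg_mul_neg]

/-- for `p > 4` and `J > J_c`, the constant configurations `σ ≡ +1` and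
`σ ≡ -1` are infinite volume ground states: for every finite `X` and every `±1`-valued
configuration, `H_X(σ_X | σ⁺) ≥ H_X(σ⁺_X | σ⁺) = 0` (and likewise for `σ⁻`). -/
theorem constant_configurations_ground_states (p J : ℝ) (hp : 4 < p) (hJ : Jcrit p < J)
    (X : Finset (ℤ × ℤ)) (σ : ℤ × ℤ → ℤ) (hσ : ∀ x, σ x = 1 ∨ σ x = -1) :
    (energyBC p J X σ (fun _ => 1) ≥ energyBC p J X (fun _ => 1) (fun _ => 1) ∧
      energyBC p J X (fun _ => 1) (fun _ => 1) = 0) ∧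
    (energyBC p J X σ (fun _ => -1) ≥ energyBC p J X (fun _ => -1) (fun _ => -1) ∧
      energyBC p J X (fun _ => -1) (fun _ => -1) = 0) := by
  have hp' : 3 < p := by linarith
  have hσ' : ∀ x, -σ x = 1 ∨ -σ x = -1 := fun x => by rcases hσ x with h | h <;> omega
  have hplus := energyBC_const (c := 1) rfl p J X
  have hminus := energyBC_const (c := -1) rfl p J X
  refine ⟨⟨?_, hplus⟩, ⟨?_, hminus⟩⟩
  · rw [hplus]
    exact energyBC_one_nonneg hp' hJ.le X hσ
  · rw [hminus, energyBC_neg_one]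
    exact energyBC_one_nonneg hp' hJ.le X hσ'
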